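/- Let F(x) and G(x) be formal power series satisfying -1 + G(x) = x/(1 - x - x·F(x)). Then for every n ≥ 2, H_n(-1+G) = -H^{(2)}_{n-2}(F). -/

import Mathlib

/-
Write `G - 1 = X * h` with `h * q = 1`, where `q = 1 - X - X * F`. Multiplying the Hankel matrix
of `X * h` on the left by the unitriangular Toeplitz matrix of `q` replaces its `(i, j)` entry by
the coefficient of `X ^ (i + j)` in `X * h * q = X` minus a sum over the first `j` coefficients
of `X * h`. So the first two columns become those of the transposition `(0 1)`, and, as `q`
agrees with `-X * F` from degree 2 on, the lower right block becomes `H^{(2)}(F)` times a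
unitriangular Toeplitz matrix of `h`.
-/

open PowerSeries

/-- The shifted Hankel determinant `H^{(k)}_n(F)`. -/
noncomputable def hankel {R : Type*} [CommRing R] (k n : ℕ) (F : PowerSeries R) : R :=
  Matrix.det (Matrix.of fun i j : Fin n => PowerSeries.coeff (R := R) (k + (i : ℕ) + (j : ℕ)) F)

open Finset Matrix

theorem Fin.sum_ite_le_eq_sum_range {M : Type*} [AddCommMonoid M] {n : ℕ} (f : ℕ → M)
    (i : Fin n) : ∑ k : Fin n, (if k ≤ i then f k else 0) = ∑ k ∈ range (i + 1), f k := by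
  simp only [Fin.le_iff_val_le_val]
  rw [Fin.sum_univ_eq_sum_range (fun k => if k ≤ (i : ℕ) then f k else 0),
    ← sum_range_add_sum_Ico _ (by omega : (i : ℕ) + 1 ≤ n),
    sum_eq_zero (s := Ico _ _) fun k hk => if_neg (by rw [mem_Ico] at hk; omega), add_zero]
  exact sum_congr rfl fun k hk => if_pos (by rw [mem_range] at hk; omega)

namespace PowerSeries

variable {R : Type*} [CommRing R]

noncomputable def hankelMatrix (k n : ℕ) (F : R⟦X⟧) : Matrix (Fin n) (Fin n) R :=
  of fun i j => coeff (k + i + j) F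

theorem hankel_eq_det_hankelMatrix (k n : ℕ) (F : R⟦X⟧) :
    hankel k n F = (hankelMatrix k n F).det :=
  rfl

noncomputable def lowerToeplitz (n : ℕ) (F : R⟦X⟧) : Matrix (Fin n) (Fin n) R :=
  of fun i j => if j ≤ i then coeff (i - j) F else 0

theorem det_lowerToeplitz {F : R⟦X⟧} (hF : constantCoeff F = 1) (n : ℕ) :
    (lowerToeplitz n F).det = 1 := by
  rw [det_of_isLowerTriangular]
  · simp [lowerToeplitz, hF]
  · intro i j hij
    exact if_neg (not_le.2 hij)

theorem lowerToeplitz_mul_hankelMatrix_apply (p q : R⟦X⟧) {n : ℕ} (i j : Fin n) :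
    (lowerToeplitz n q * hankelMatrix 0 n p) i j =
      coeff (i + j) (p * q) - ∑ l ∈ range j, coeff l p * coeff (i + j - l) q := by
  have hrow : (lowerToeplitz n q * hankelMatrix 0 n p) i j =
      ∑ k ∈ range (i + 1), coeff (j + k) p * coeff (i - k) q := by
    simp only [mul_apply, lowerToeplitz, hankelMatrix, of_apply, zero_add, ite_mul, zero_mul]
    rw [Fin.sum_ite_le_eq_sum_range (fun k => coeff (i - k) q * coeff (k + j) p)]
    exact sum_congr rfl fun k _ => by rw [mul_comm, add_comm k]
  rw [hrow, coeff_mul, Nat.sum_antidiagonal_eq_sum_range_succ_mk, Nat.succ_eq_add_one,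
    show (i : ℕ) + j + 1 = j + (i + 1) by ring, sum_range_add _ j, add_sub_cancel_left]
  refine sum_congr rfl fun k _ => ?_
  rw [add_comm (i : ℕ), Nat.add_sub_add_left]

theorem det_eq_neg_det_submatrix_natAdd {m : ℕ} (M : Matrix (Fin (2 + m)) (Fin (2 + m)) R)
    (hM : ∀ i j : Fin (2 + m), (j : ℕ) < 2 → M i j = if (i : ℕ) + j = 1 then 1 else 0) :
    M.det = -(M.submatrix (Fin.natAdd 2) (Fin.natAdd 2)).det := by
  rw [← det_submatrix_equiv_self finSumFinEquiv, ← fromBlocks_toBlocks (M.submatrix _ _)]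
  have h₁₁ : (M.submatrix finSumFinEquiv finSumFinEquiv).toBlocks₁₁ = !![0, 1; 1, 0] := by
    ext i j
    fin_cases i <;> fin_cases j <;> simp [toBlocks₁₁, hM]
  have h₂₁ : (M.submatrix finSumFinEquiv finSumFinEquiv).toBlocks₂₁ = 0 := by
    ext i j
    simp only [toBlocks₂₁, of_apply, submatrix_apply, finSumFinEquiv_apply_left,
      finSumFinEquiv_apply_right, Matrix.zero_apply]
    rw [hM _ _ (by simp; omega), if_neg (by simp; omega)]
  rw [h₁₁, h₂₁, det_fromBlocks_zero₂₁, det_fin_two_of]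
  simp only [mul_zero, mul_one, zero_sub, neg_one_mul]
  rfl

theorem exists_eq_X_mul_of_mul_eq_X {p q : R⟦X⟧} (hpq : p * q = X) (hq : constantCoeff q = 1) :
    ∃ h, p = X * h ∧ h * q = 1 := by
  have hp : constantCoeff p = 0 := by simpa [hq] using congrArg constantCoeff hpq
  have hpX : p = X * mk fun s => coeff (s + 1) p := by
    conv_lhs => rw [eq_X_mul_shift_add_const p]
    simp [hp]
  refine ⟨_, hpX, X_mul_cancel ?_⟩
  rw [← mul_assoc, ← hpX, hpq, mul_one]

theorem lowerToeplitz_mul_hankelMatrix_X_mul_apply_of_lt_two {h q : R⟦X⟧} (hhq : h * q = 1)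
    {n : ℕ} (i j : Fin n) (hj : (j : ℕ) < 2) :
    (lowerToeplitz n q * hankelMatrix 0 n (X * h) : Matrix (Fin n) (Fin n) R) i j =
      if (i : ℕ) + j = 1 then 1 else 0 := by
  rw [lowerToeplitz_mul_hankelMatrix_apply, mul_assoc, hhq, mul_one, coeff_X]
  obtain hj | hj : (j : ℕ) = 0 ∨ (j : ℕ) = 1 := by omega
  all_goals simp [hj]

theorem coeff_add_two_one_sub_X_sub_X_mul (F : R⟦X⟧) (s : ℕ) :
    coeff (s + 2) (1 - X - X * F) = -coeff (s + 1) F := by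
  simp [coeff_one, coeff_X, coeff_succ_X_mul]

theorem submatrix_natAdd_lowerToeplitz_mul_hankelMatrix {F h : R⟦X⟧}
    (hh : h * (1 - X - X * F) = 1) (m : ℕ) :
    (lowerToeplitz (2 + m) (1 - X - X * F) * hankelMatrix 0 (2 + m) (X * h)).submatrix
      (Fin.natAdd 2) (Fin.natAdd 2) = hankelMatrix 2 m F * (lowerToeplitz m h)ᵀ := by
  ext i j
  rw [submatrix_apply, lowerToeplitz_mul_hankelMatrix_apply, mul_assoc, hh, mul_one, coeff_X,
    if_neg (by simp; omega), zero_sub]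
  simp only [mul_apply, hankelMatrix, lowerToeplitz, transpose_apply, of_apply, mul_ite, mul_zero]
  rw [Fin.sum_ite_le_eq_sum_range (fun k => coeff (2 + i + k) F * coeff (j - k) h)]
  conv_rhs => rw [← sum_range_reflect]
  rw [Fin.val_natAdd, Fin.val_natAdd, show 2 + (j : ℕ) = j + 1 + 1 by ring,
    sum_range_succ', coeff_zero_X_mul, zero_mul, add_zero, ← sum_neg_distrib]
  refine sum_congr rfl fun l hl => ?_
  rw [mem_range] at hl
  rw [coeff_succ_X_mul, show 2 + (i : ℕ) + (j + 1 + 1) - (l + 1) = i + (j - l) + 1 + 2 by omega,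
    coeff_add_two_one_sub_X_sub_X_mul,
    show 2 + (i : ℕ) + (j + 1 - 1 - l) = i + (j - l) + 1 + 1 by omega,
    show (j : ℕ) - (j + 1 - 1 - l) = l by omega]
  ring

end PowerSeries

theorem stmt6 {R : Type*} [CommRing R] (F G : PowerSeries R)
    (hG : (G - 1) * (1 - PowerSeries.X - PowerSeries.X * F) = PowerSeries.X) (n : ℕ) (hn : 2 ≤ n) :
    hankel 0 n (G - 1) = - hankel 2 (n - 2) F := by
  obtain ⟨m, rfl⟩ : ∃ m, n = 2 + m := ⟨n - 2, by omega⟩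
  obtain ⟨h, hGh, hh⟩ := exists_eq_X_mul_of_mul_eq_X hG (by simp)
  have hh₀ : constantCoeff h = 1 := by simpa using congrArg constantCoeff hh
  set T := lowerToeplitz (2 + m) (1 - X - X * F)
  rw [Nat.add_sub_cancel_left]
  calc hankel 0 (2 + m) (G - 1) = (T * hankelMatrix 0 (2 + m) (X * h)).det := by
        rw [det_mul, det_lowerToeplitz (by simp), one_mul, ← hGh, hankel_eq_det_hankelMatrix]
    _ = -((T * hankelMatrix 0 (2 + m) (X * h)).submatrix (Fin.natAdd 2) (Fin.natAdd 2)).det :=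
        det_eq_neg_det_submatrix_natAdd _ (lowerToeplitz_mul_hankelMatrix_X_mul_apply_of_lt_two hh)
    _ = -hankel 2 m F := by
        rw [submatrix_natAdd_lowerToeplitz_mul_hankelMatrix hh, det_mul, det_transpose,
          det_lowerToeplitz hh₀, mul_one, hankel_eq_det_hankelMatrix]
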